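/- Let 𝔽 be a field, θ a probability distribution on [k], and f : V_1×⋯×V_k → 𝔽 a nonzero multilinear map. Then ρ^θ(f) = min_F H_θ(supp_F f), where the minimum is over all k-tuples F of complete flags of V_1,…,V_k. -/

import Mathlib

open scoped BigOperators
open scoped Classical
open scoped ComplexOrder

noncomputable section

namespace CVZ

variable {k : ℕ}

/-- A concrete `k`-tensor over `F` with index types `I i`: the coefficient array
(in the standard bases) of a multilinear map `V₁ × ⋯ × V_k → F` with `dim V_i = |I i|`. -/
abbrev Tensor (F : Type*) (I : Fin k → Type*) : Type _ := (∀ i, I i) → F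

section Basic

variable {F : Type*} [Field F] {I J : Fin k → Type*}
  [∀ i, Fintype (I i)] [∀ i, DecidableEq (I i)]
  [∀ i, Fintype (J i)] [∀ i, DecidableEq (J i)]

/-- Coefficient array of the restriction `f ∘ (A₁, …, A_k)`, where `A_i : W_i → V_i`
is given by the matrix `A i`. -/
def restrictBy (A : ∀ i, Matrix (I i) (J i) F) (t : Tensor F I) : Tensor F J :=
  fun β => ∑ α : ∀ i, I i, (∏ i, A i (α i) (β i)) * t α

/-- `t` restricts to `s`. -/
def Restricts (t : Tensor F I) (s : Tensor F J) : Prop :=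
  ∃ A : ∀ i, Matrix (I i) (J i) F, restrictBy A t = s

/-- A choice of bases of the spaces `V_i`, encoded as a tuple of invertible matrices. -/
def IsBasisTuple (B : ∀ i, Matrix (I i) (I i) F) : Prop := ∀ i, IsUnit (B i)

/-- Support of a tensor (with respect to the standard bases). -/
def supp (t : Tensor F I) : Set (∀ i, I i) := {α | t α ≠ 0}

end Basic

section Entropy

/-- A probability distribution on the finite set `X`. -/
def IsProbDist {X : Type*} [Fintype X] (P : X → ℝ) : Prop :=
  (∀ x, 0 ≤ P x) ∧ ∑ x, P x = 1

/-- Base-2 Shannon entropy. -/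
def H2 {X : Type*} [Fintype X] (P : X → ℝ) : ℝ :=
  ∑ x, -(P x * Real.logb 2 (P x))

variable {I : Fin k → Type*} [∀ i, Fintype (I i)] [∀ i, DecidableEq (I i)]

/-- The `i`-th marginal of a distribution on a product set. -/
def marg (P : (∀ i, I i) → ℝ) (i : Fin k) : I i → ℝ :=
  fun a => ∑ α : ∀ i, I i, if α i = a then P α else 0

/-- `H_θ(P)`, the `θ`-weighted average of the marginal entropies. -/
def Hw (θ : Fin k → ℝ) (P : (∀ i, I i) → ℝ) : ℝ :=
  ∑ i, θ i * H2 (marg P i)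

/-- `H_θ(Φ)`, the supremum of `H_θ(P)` over distributions `P` supported on `Φ`. -/
def HwSet (θ : Fin k → ℝ) (Φ : Set (∀ i, I i)) : ℝ :=
  sSup {h | ∃ P : (∀ i, I i) → ℝ, IsProbDist P ∧ (∀ α, P α ≠ 0 → α ∈ Φ) ∧ h = Hw θ P}

/-- Maximal points of a subset of the product order. -/
def maxPoints [∀ i, LinearOrder (I i)] (Φ : Set (∀ i, I i)) : Set (∀ i, I i) :=
  {α | α ∈ Φ ∧ ∀ β ∈ Φ, ¬ α < β}

end Entropy

section SuppFunc

variable {F : Type*} [Field F] {I : Fin k → Type*} [∀ i, Fintype (I i)] [∀ i, DecidableEq (I i)]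

/-- The logarithmic Strassen upper support functional `ρ^θ`. -/
def rhoUpper (θ : Fin k → ℝ) (t : Tensor F I) : ℝ :=
  sInf {h | ∃ B : ∀ i, Matrix (I i) (I i) F, IsBasisTuple B ∧
    h = HwSet θ (supp (restrictBy B t))}

/-- The Strassen upper support functional `ζ^θ`. -/
def zetaUpper (θ : Fin k → ℝ) (t : Tensor F I) : ℝ :=
  if t = 0 then 0 else (2 : ℝ) ^ rhoUpper θ t

/-- The logarithmic Strassen lower support functional `ρ_θ`. -/
def rhoLower [∀ i, LinearOrder (I i)] (θ : Fin k → ℝ) (t : Tensor F I) : ℝ :=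
  sSup {h | ∃ B : ∀ i, Matrix (I i) (I i) F, IsBasisTuple B ∧
    h = HwSet θ (maxPoints (supp (restrictBy B t)))}

/-- The Strassen lower support functional `ζ_θ`. -/
def zetaLower [∀ i, LinearOrder (I i)] (θ : Fin k → ℝ) (t : Tensor F I) : ℝ :=
  if t = 0 then 0 else (2 : ℝ) ^ rhoLower θ t

/-- The instability of a tensor. -/
def instab (t : Tensor F I) : ℝ :=
  sSup {ε : ℝ | 0 ≤ ε ∧ ∃ B : ∀ i, Matrix (I i) (I i) F, IsBasisTuple B ∧
    ∃ w : ∀ i, I i → ℝ, (∀ i x, 0 ≤ w i x) ∧ (∀ i, ∃ x, w i x ≠ 0) ∧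
      ∀ a ∈ supp (restrictBy B t), ∑ i, w i (a i) ≤
        ∑ i, ((∑ x : I i, w i x) / (Fintype.card (I i) : ℝ) - ε * ⨆ x : I i, w i x)}

end SuppFunc

section Ops

variable {F : Type*} [Field F]

/-- The unit tensor `⟨r⟩`. -/
def unitTensor (F : Type*) [Field F] (k r : ℕ) : Tensor F (fun _ : Fin k => Fin r) :=
  fun α => if ∀ i j : Fin k, α i = α j then 1 else 0

variable {n m : Fin k → ℕ}

/-- Direct sum of two tensors, with the concatenated (naturally ordered) bases. -/
def dirSumFin (s : Tensor F fun i => Fin (n i)) (t : Tensor F fun i => Fin (m i)) :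
    Tensor F fun i => Fin (n i + m i) :=
  fun α =>
    (if h : ∀ i, (α i : ℕ) < n i then s (fun i => ⟨(α i : ℕ), h i⟩) else 0) +
    (if h : ∀ i, n i ≤ (α i : ℕ) then
      t (fun i => ⟨(α i : ℕ) - n i, by have h1 := (α i).isLt; have h2 := h i; omega⟩) else 0)

/-- Tensor (Kronecker) product of two tensors, with the product bases ordered naturally. -/
def tensMulFin (s : Tensor F fun i => Fin (n i)) (t : Tensor F fun i => Fin (m i)) :
    Tensor F fun i => Fin (n i * m i) :=
  fun α =>
    s (fun i => ⟨(α i : ℕ) / m i, by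
      have h := (α i).isLt
      exact Nat.div_lt_of_lt_mul (lt_of_lt_of_le h (Nat.mul_comm (n i) (m i)).le)⟩) *
    t (fun i => ⟨(α i : ℕ) % m i, by
      have h := (α i).isLt
      have hpos : 0 < n i * m i := Nat.lt_of_le_of_lt (Nat.zero_le _) h
      have hm : 0 < m i := by
        rcases Nat.eq_zero_or_pos (m i) with h0 | h0
        · simp [h0] at hpos
        · exact h0
      exact Nat.mod_lt _ hm⟩)

/-- The `N`-th tensor power of a tensor (grouping the legs into `k` groups). -/
def tpow {I : Fin k → Type*} (t : Tensor F I) (N : ℕ) : Tensor F fun i => Fin N → I i :=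
  fun α => ∏ j : Fin N, t fun i => α i j

end Ops

section Subrank

variable {F : Type*} [Field F] {I : Fin k → Type*} [∀ i, Fintype (I i)] [∀ i, DecidableEq (I i)]

/-- The subrank `Q(t)` of a tensor: the largest `r` with `⟨r⟩ ≤ t`. -/
def Qtensor (t : Tensor F I) : ℕ :=
  sSup {r : ℕ | Restricts t (unitTensor F k r)}

/-- A slice: a tensor of the form `v ⊗ w` with `v` in the `j`-th leg. -/
def IsSlice (s : Tensor F I) : Prop :=
  ∃ (j : Fin k) (v : I j → F) (w : (∀ i : {i : Fin k // i ≠ j}, I i.1) → F),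
    ∀ α, s α = v (α j) * w (fun i => α i.1)

/-- The slice rank of a tensor. -/
def sliceRank (t : Tensor F I) : ℕ :=
  sInf {r : ℕ | ∃ c : Fin r → Tensor F I, (∀ a, IsSlice (c a)) ∧ t = ∑ a, c a}

end Subrank

section Combinatorial

variable {I : Fin k → Type*}

/-- A diagonal: any two distinct elements differ in all coordinates. -/
def IsDiagonal (D : Set (∀ i, I i)) : Prop :=
  ∀ a ∈ D, ∀ b ∈ D, a ≠ b → ∀ i, a i ≠ b i

/-- The `i`-th projection of a set of tuples. -/
def projSet (D : Set (∀ i, I i)) (i : Fin k) : Set (I i) := {x | ∃ a ∈ D, a i = x}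

/-- A free diagonal in `Φ`: a diagonal `D` with `D = Φ ∩ (D₁ × ⋯ × D_k)`. -/
def IsFreeDiagonal (D Φ : Set (∀ i, I i)) : Prop :=
  IsDiagonal D ∧ D = Φ ∩ {a | ∀ i, a i ∈ projSet D i}

/-- The (combinatorial) subrank of a set: the maximal size of a free diagonal. -/
def Qset (Φ : Set (∀ i, I i)) : ℕ :=
  sSup {r : ℕ | ∃ D : Set (∀ i, I i), IsFreeDiagonal D Φ ∧ D.ncard = r}

/-- The `N`-fold coordinatewise power of a set of tuples. -/
def setPow (Φ : Set (∀ i, I i)) (N : ℕ) : Set (∀ i, Fin N → I i) :=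
  {α | ∀ j : Fin N, (fun i => α i j) ∈ Φ}

/-- A tight set. -/
def TightSet (Φ : Set (∀ i, I i)) : Prop :=
  ∃ u : ∀ i, I i → ℤ, (∀ i, Function.Injective (u i)) ∧ ∀ α ∈ Φ, ∑ i, u i (α i) = 0

/-- `Φ` is a combinatorial degeneration of `Ψ` (written `Ψ ⊵ Φ`). -/
def CombDegen (Ψ Φ : Set (∀ i, I i)) : Prop :=
  Φ ⊆ Ψ ∧ ∃ u : ∀ i, I i → ℤ,
    (∀ α ∈ Φ, ∑ i, u i (α i) = 0) ∧ ∀ α ∈ Ψ, α ∉ Φ → 0 < ∑ i, u i (α i)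

end Combinatorial

/-- A tight tensor: some basis tuple gives a tight support. -/
def TightTensor {F : Type*} [Field F] {I : Fin k → Type*} [∀ i, Fintype (I i)]
    [∀ i, DecidableEq (I i)] (t : Tensor F I) : Prop :=
  ∃ B : ∀ i, Matrix (I i) (I i) F, IsBasisTuple B ∧ TightSet (supp (restrictBy B t))

/-- A complete (decreasing) flag of subspaces, `W 0 = ⊤` and `dim (W j) = dim V − j`. -/
def IsCompleteFlag (F : Type*) [Field F] {V : Type*} [AddCommGroup V] [Module F V]
    (W : ℕ → Submodule F V) : Prop :=
  Antitone W ∧ W 0 = ⊤ ∧ ∀ j : ℕ, Module.finrank F (W j) = Module.finrank F V - j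

/-- Evaluation of (the multilinear map associated with) `t` at a tuple of vectors. -/
def eval {F : Type*} [Field F] {I : Fin k → Type*} [∀ i, Fintype (I i)] [∀ i, DecidableEq (I i)]
    (t : Tensor F I) (v : ∀ i, I i → F) : F :=
  ∑ α : ∀ i, I i, (∏ i, v i (α i)) * t α

/-- The support of `t` with respect to a tuple of complete flags. -/
def suppFlag {F : Type*} [Field F] {n : Fin k → ℕ} (t : Tensor F fun i => Fin (n i))
    (W : ∀ i, ℕ → Submodule F (Fin (n i) → F)) : Set (∀ i, Fin (n i)) :=
  {α | ∃ v : ∀ i, Fin (n i) → F, (∀ i, v i ∈ W i (α i : ℕ)) ∧ eval t v ≠ 0}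

section Quantum

variable {I : Fin k → Type*} [∀ i, Fintype (I i)] [∀ i, DecidableEq (I i)]

/-- Von Neumann entropy (base 2) of a Hermitian matrix. -/
def vnEntropy {d : Type*} [Fintype d] [DecidableEq d] (ρ : Matrix d d ℂ) : ℝ :=
  if h : ρ.IsHermitian then ∑ x, -(h.eigenvalues x * Real.logb 2 (h.eigenvalues x)) else 0

/-- The `j`-th marginal (reduced density matrix) of the pure state `|t⟩⟨t| / ⟨t|t⟩`. -/
def margMat (t : Tensor ℂ I) (j : Fin k) : Matrix (I j) (I j) ℂ :=
  fun a b =>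
    (∑ α : ∀ i, I i, ∑ β : ∀ i, I i,
      if α j = a ∧ β j = b ∧ (∀ i, i ≠ j → α i = β i) then t α * star (t β) else 0) /
    ∑ α : ∀ i, I i, t α * star (t α)

/-- The logarithmic lower quantum functional `E_θ` for `θ` a distribution on `[k]`. -/
def Ewq (θ : Fin k → ℝ) (t : Tensor ℂ I) : ℝ :=
  sSup {h | ∃ A : ∀ i, Matrix (I i) (I i) ℂ, IsBasisTuple A ∧
    h = ∑ j, θ j * vnEntropy (margMat (restrictBy A t) j)}

/-- The marginal (reduced density matrix) on the legs in `S` of the pure state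
`|t⟩⟨t| / ⟨t|t⟩`. -/
def margMatSet (t : Tensor ℂ I) (S : Finset (Fin k)) :
    Matrix (∀ i : {x : Fin k // x ∈ S}, I i.1) (∀ i : {x : Fin k // x ∈ S}, I i.1) ℂ :=
  fun a b =>
    (∑ α : ∀ i, I i, ∑ β : ∀ i, I i,
      if (∀ (i : Fin k) (hi : i ∈ S), α i = a ⟨i, hi⟩ ∧ β i = b ⟨i, hi⟩) ∧
         (∀ i, i ∉ S → α i = β i)
      then t α * star (t β) else 0) /
    ∑ α : ∀ i, I i, t α * star (t α)

/-- A probability distribution on the bipartitions `{S, S̄}` of `[k]` (encoded by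
choosing a representative `S` for each bipartition occurring in the support). -/
def IsBipDist (θ : Finset (Fin k) → ℝ) : Prop :=
  (∀ S, 0 ≤ θ S) ∧ (∀ S, θ S ≠ 0 → S.Nonempty ∧ Sᶜ.Nonempty) ∧
    ∑ S : Finset (Fin k), θ S = 1

/-- The logarithmic lower quantum functional `E_θ` for `θ` a distribution on bipartitions. -/
def EwqBip (θ : Finset (Fin k) → ℝ) (t : Tensor ℂ I) : ℝ :=
  sSup {h | ∃ A : ∀ i, Matrix (I i) (I i) ℂ, IsBasisTuple A ∧
    h = ∑ S : Finset (Fin k), θ S * vnEntropy (margMatSet (restrictBy A t) S)}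

/-- The lower quantum functional `F_θ`. -/
def FwqBip (θ : Finset (Fin k) → ℝ) (t : Tensor ℂ I) : ℝ :=
  if t = 0 then 0 else (2 : ℝ) ^ EwqBip θ t

/-- Degeneration: `t` lies in the closure of the `GL × ⋯ × GL`-orbit of `s`. -/
def Degen (s t : Tensor ℂ I) : Prop :=
  t ∈ closure {u : Tensor ℂ I | ∃ A : ∀ i, Matrix (I i) (I i) ℂ,
    IsBasisTuple A ∧ restrictBy A s = u}

end Quantum

/-- Trace norm of a complex matrix: `Tr √(AᴴA)`. -/
def traceNorm {d : Type*} [Fintype d] [DecidableEq d] (A : Matrix d d ℂ) : ℝ :=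
  (((Matrix.posSemidef_conjTranspose_mul_self A).1.eigenvectorUnitary.1 *
      Matrix.diagonal (((↑) : ℝ → ℂ) ∘ (√·) ∘ (Matrix.posSemidef_conjTranspose_mul_self A).1.eigenvalues) *
      (star (Matrix.posSemidef_conjTranspose_mul_self A).1.eigenvectorUnitary : Matrix d d ℂ)).trace).re

/-- `conjIter ρ X j = X_j ⋯ X_2 X_1 ρ X_1 X_2 ⋯ X_j`. -/
def conjIter {d : Type*} [Fintype d] (ρ : Matrix d d ℂ) {n : ℕ}
    (X : Fin n → Matrix d d ℂ) : ℕ → Matrix d d ℂ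
  | 0 => ρ
  | (j + 1) => if h : j < n then X ⟨j, h⟩ * conjIter ρ X j * X ⟨j, h⟩ else conjIter ρ X j

/-- A tricolored sum-free set in `G × G × G`. -/
def IsTriColoredSumFree {G : Type*} [AddCommGroup G] (Γ : Set (G × G × G)) : Prop :=
  (∀ a ∈ Γ, ∀ b ∈ Γ, a ≠ b → a.1 ≠ b.1 ∧ a.2.1 ≠ b.2.1 ∧ a.2.2 ≠ b.2.2) ∧
  ∀ x y z : G, (∃ a ∈ Γ, a.1 = x) → (∃ a ∈ Γ, a.2.1 = y) → (∃ a ∈ Γ, a.2.2 = z) →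
    (x + y + z = 0 ↔ (x, y, z) ∈ Γ)

/-- The maximal size `s₃(G)` of a tricolored sum-free set in `G × G × G`. -/
def s3 (G : Type*) [AddCommGroup G] : ℕ :=
  sSup {r : ℕ | ∃ Γ : Set (G × G × G), IsTriColoredSumFree Γ ∧ Γ.ncard = r}

/-- Binary entropy function (base 2), with the convention `0 · log 0 = 0`. -/
def binH (p : ℝ) : ℝ := -(p * Real.logb 2 p) - (1 - p) * Real.logb 2 (1 - p)

/-!
Given bases `C`, let `P` maximise `H_θ` among distributions on `Φ = supp_C f`, and reorder
each basis so that the marginals of `P` are decreasing. Maximality of `P` gives the KKT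
inequalities `∑ᵢ θᵢ (-log Pᵢ(βᵢ)) ≤ H_θ(P)` for all `β ∈ Φ`; as the marginals decrease, they
persist on the lower closure of `Φ`, and Gibbs' inequality then bounds `H_θ(Q) ≤ H_θ(P)` for
every `Q` on that lower closure. The flag spanned by the tails of the reordered bases has its
support inside the lower closure of `Φ`, so flags do at least as well as bases. Conversely,
a basis adapted to a tuple of complete flags has its support inside the flag support.
-/

section Entropy

open Finset

variable {X : Type*} [Fintype X]

lemma IsProbDist.le_one {p : X → ℝ} (hp : IsProbDist p) (x : X) : p x ≤ 1 :=
  hp.2 ▸ single_le_sum (fun y _ => hp.1 y) (mem_univ x)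

lemma IsProbDist.mix {p q : X → ℝ} (hp : IsProbDist p) (hq : IsProbDist q) {ε : ℝ}
    (h0 : 0 ≤ ε) (h1 : ε ≤ 1) : IsProbDist ((1 - ε) • p + ε • q) := by
  refine ⟨fun x => ?_, ?_⟩
  · have := hp.1 x
    have := hq.1 x
    simp only [Pi.add_apply, Pi.smul_apply, smul_eq_mul]
    positivity
  · simp only [Pi.add_apply, Pi.smul_apply, smul_eq_mul, sum_add_distrib, ← mul_sum, hp.2, hq.2]
    ring

lemma isProbDist_single [DecidableEq X] (x : X) : IsProbDist (Pi.single x 1 : X → ℝ) :=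
  ⟨fun y => by by_cases h : y = x <;> simp [h], by simp⟩

lemma H2_nonneg {p : X → ℝ} (hp : IsProbDist p) : 0 ≤ H2 p :=
  sum_nonneg fun x _ => neg_nonneg.2 <|
    mul_nonpos_of_nonneg_of_nonpos (hp.1 x) (Real.logb_nonpos one_lt_two (hp.1 x) (hp.le_one x))

lemma H2_le_sum_mul_neg_logb {p r : X → ℝ} (hp : IsProbDist p) (hr0 : ∀ x, 0 ≤ r x)
    (hr1 : ∑ x, r x ≤ 1) (hpr : ∀ x, p x ≠ 0 → r x ≠ 0) :
    H2 p ≤ ∑ x, p x * -Real.logb 2 (r x) := by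
  have hterm : ∀ x, p x * Real.log (r x) - p x * Real.log (p x) ≤ r x - p x := by
    intro x
    rcases (hp.1 x).eq_or_lt with h | h
    · simp [← h, hr0 x]
    have hr : 0 < r x := (hr0 x).lt_of_ne (hpr x h.ne').symm
    calc p x * Real.log (r x) - p x * Real.log (p x) = p x * Real.log (r x / p x) := by
          rw [Real.log_div hr.ne' h.ne']; ring
      _ ≤ p x * (r x / p x - 1) :=
          mul_le_mul_of_nonneg_left (Real.log_le_sub_one_of_pos (div_pos hr h)) h.le
      _ = r x - p x := by field_simp
  have hsum : ∑ x, (p x * Real.log (r x) - p x * Real.log (p x)) ≤ 0 := by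
    have hr : ∑ x, (r x - p x) = ∑ x, r x - 1 := by rw [sum_sub_distrib, hp.2]
    linarith [sum_le_sum fun x (_ : x ∈ univ) => hterm x]
  have hlog2 : 0 < Real.log 2 := Real.log_pos one_lt_two
  have hdiff : H2 p - ∑ x, p x * -Real.logb 2 (r x)
      = (∑ x, (p x * Real.log (r x) - p x * Real.log (p x))) / Real.log 2 := by
    simp only [H2, Real.logb, ← sum_sub_distrib, sum_div]
    exact sum_congr rfl fun x _ => by ring
  linarith [div_nonpos_of_nonpos_of_nonneg hsum hlog2.le]

lemma H2_mix_single_ge [DecidableEq X] {p : X → ℝ} (hp : IsProbDist p) (b : X) {ε : ℝ}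
    (h0 : 0 < ε) (h1 : ε < 1) :
    (1 - ε) * H2 p + ε * -Real.logb 2 (p b + ε) ≤ H2 ((1 - ε) • p + ε • Pi.single b 1) := by
  set m := (1 - ε) • p + ε • (Pi.single b 1 : X → ℝ)
  have hm_apply : ∀ x, m x = (1 - ε) * p x + ε * (Pi.single b 1 : X → ℝ) x := fun x => rfl
  have hmb : m b = (1 - ε) * p b + ε := by simp [hm_apply]
  have hmb_pos : 0 < m b := by nlinarith [hp.1 b]
  have hmb_le : m b ≤ p b + ε := by nlinarith [hp.1 b]
  have hgibbs : H2 p ≤ ∑ x, p x * -Real.logb 2 (m x) := by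
    have hmd := hp.mix (isProbDist_single b) h0.le h1.le
    refine H2_le_sum_mul_neg_logb hp hmd.1 hmd.2.le fun x hx => ?_
    have hsingle : 0 ≤ ε * (Pi.single b 1 : X → ℝ) x :=
      mul_nonneg h0.le ((isProbDist_single b).1 x)
    have hpx : 0 < (1 - ε) * p x := mul_pos (by linarith) ((hp.1 x).lt_of_ne' hx)
    rw [hm_apply]
    positivity
  have hH2m : H2 m = (1 - ε) * ∑ x, p x * -Real.logb 2 (m x) + ε * -Real.logb 2 (m b) := by
    have hterm : ∀ x, -(m x * Real.logb 2 (m x)) = (1 - ε) * (p x * -Real.logb 2 (m x))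
        + (Pi.single b (ε * -Real.logb 2 (m b)) : X → ℝ) x := by
      intro x
      rcases eq_or_ne x b with rfl | hx
      · rw [Pi.single_eq_same, hmb]; ring
      · rw [Pi.single_eq_of_ne hx, hm_apply x, Pi.single_eq_of_ne hx]; ring
    simp only [H2, hterm, sum_add_distrib, ← mul_sum, sum_pi_single', mem_univ, if_true]
  have hlog : -Real.logb 2 (p b + ε) ≤ -Real.logb 2 (m b) :=
    neg_le_neg (Real.logb_le_logb_of_le one_lt_two hmb_pos hmb_le)
  rw [hH2m]
  nlinarith

end Entropy

section Marginals

open Finset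

variable {I J : Fin k → Type*} [∀ i, Fintype (I i)] [∀ i, DecidableEq (I i)]
  [∀ i, Fintype (J i)] [∀ i, DecidableEq (J i)]

lemma marg_nonneg {P : (∀ i, I i) → ℝ} (hP : ∀ α, 0 ≤ P α) (i : Fin k) (a : I i) :
    0 ≤ marg P i a :=
  sum_nonneg fun α _ => by split_ifs <;> simp [hP α]

lemma sum_marg_mul (P : (∀ i, I i) → ℝ) (i : Fin k) (c : I i → ℝ) :
    ∑ a, marg P i a * c a = ∑ α, P α * c (α i) := by
  simp only [marg, sum_mul, ite_mul, zero_mul]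
  rw [sum_comm]
  simp

lemma IsProbDist.marg {P : (∀ i, I i) → ℝ} (hP : IsProbDist P) (i : Fin k) :
    IsProbDist (marg P i) :=
  ⟨marg_nonneg hP.1 i, by simpa [hP.2] using sum_marg_mul P i 1⟩

lemma exists_ne_zero_of_marg_ne_zero {P : (∀ i, I i) → ℝ} {i : Fin k} {a : I i}
    (h : marg P i a ≠ 0) : ∃ α, P α ≠ 0 ∧ α i = a := by
  obtain ⟨α, -, hα⟩ := exists_ne_zero_of_sum_ne_zero h
  by_cases hαi : α i = a
  · exact ⟨α, by simpa [hαi] using hα, hαi⟩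
  · simp [hαi] at hα

lemma marg_mix (P Q : (∀ i, I i) → ℝ) (c d : ℝ) (i : Fin k) :
    marg (c • P + d • Q) i = c • marg P i + d • marg Q i := by
  funext a
  simp only [CVZ.marg, Pi.add_apply, Pi.smul_apply, smul_eq_mul, mul_sum, ← sum_add_distrib]
  exact sum_congr rfl fun α _ => by split_ifs <;> simp

lemma marg_single (β : ∀ i, I i) (i : Fin k) :
    marg (Pi.single β 1) i = (Pi.single (β i) 1 : I i → ℝ) := by
  funext a
  simp only [CVZ.marg, Pi.single_apply]
  rw [sum_eq_single β] <;> aesop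

lemma Hw_nonneg {θ : Fin k → ℝ} (hθ : ∀ i, 0 ≤ θ i) {P : (∀ i, I i) → ℝ} (hP : IsProbDist P) :
    0 ≤ Hw θ P :=
  sum_nonneg fun i _ => mul_nonneg (hθ i) (H2_nonneg (hP.marg i))

lemma marg_comp_piCongrRight (σ : ∀ i, J i ≃ I i) (P : (∀ i, I i) → ℝ) (i : Fin k) :
    marg (P ∘ Equiv.piCongrRight σ) i = marg P i ∘ σ i := by
  funext a
  simp only [CVZ.marg, Function.comp_apply]
  rw [← (Equiv.piCongrRight σ).sum_comp (fun γ => if γ i = σ i a then P γ else 0)]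
  simp [Equiv.piCongrRight_apply]

lemma Hw_comp_piCongrRight (θ : Fin k → ℝ) (σ : ∀ i, J i ≃ I i) (P : (∀ i, I i) → ℝ) :
    Hw θ (P ∘ Equiv.piCongrRight σ) = Hw θ P := by
  simp only [Hw, H2, marg_comp_piCongrRight, Function.comp_apply]
  exact sum_congr rfl fun i _ => by
    rw [(σ i).sum_comp fun a => -(marg P i a * Real.logb 2 (marg P i a))]

end Marginals

section ProbDistsOn

open Finset

variable {X : Type*} [Fintype X]

def probDistsOn (Φ : Set X) : Set (X → ℝ) := {P | IsProbDist P ∧ ∀ x, P x ≠ 0 → x ∈ Φ}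

lemma isCompact_probDistsOn (Φ : Set X) : IsCompact (probDistsOn Φ) := by
  have hclosed : IsClosed (probDistsOn Φ) := by
    have hsupp : probDistsOn Φ = {P | ∀ x, 0 ≤ P x} ∩ {P | ∑ x, P x = 1} ∩
        ⋂ x ∈ Φᶜ, {P | P x = 0} := by
      ext P
      simp only [probDistsOn, IsProbDist, Set.mem_ofPred_eq, Set.mem_inter_iff, Set.mem_iInter,
        Set.mem_compl_iff, not_imp_comm, and_assoc]
    rw [hsupp, Set.ofPred_forall]
    exact ((isClosed_iInter fun x => isClosed_le continuous_const (continuous_apply x)).inter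
      (isClosed_eq (continuous_finsetSum _ fun x _ => continuous_apply x) continuous_const)).inter
      (isClosed_biInter fun x _ => isClosed_eq (continuous_apply x) continuous_const)
  refine (isCompact_univ_pi fun _ => isCompact_Icc (a := (0 : ℝ)) (b := 1)).of_isClosed_subset
    hclosed fun P hP x _ => ⟨hP.1.1 x, hP.1.le_one x⟩

lemma comp_mem_probDistsOn {Y : Type*} [Fintype Y] {Φ : Set X} {P : X → ℝ}
    (hP : P ∈ probDistsOn Φ) (e : Y ≃ X) :
    P ∘ e ∈ probDistsOn (e ⁻¹' Φ) :=
  ⟨⟨fun x => hP.1.1 (e x), by rw [← hP.1.2]; exact e.sum_comp P⟩, fun x hx => hP.2 (e x) hx⟩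

end ProbDistsOn

section HwSet

open Finset

variable {I J : Fin k → Type*} [∀ i, Fintype (I i)] [∀ i, DecidableEq (I i)]
  [∀ i, Fintype (J i)] [∀ i, DecidableEq (J i)]

lemma continuous_Hw (θ : Fin k → ℝ) : Continuous (Hw θ : ((∀ i, I i) → ℝ) → ℝ) := by
  have hmarg : ∀ i a, Continuous fun P : (∀ i, I i) → ℝ => marg P i a := fun i a =>
    continuous_finsetSum _ fun α _ => by split_ifs <;> fun_prop
  have hlogb : Continuous fun t : ℝ => t * Real.logb 2 t := by
    simpa [Real.logb, mul_div_assoc] using Real.continuous_mul_log.div_const (Real.log 2)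
  exact continuous_finsetSum _ fun i _ => continuous_const.mul <|
    continuous_finsetSum _ fun a _ => (hlogb.comp (hmarg i a)).neg

lemma HwSet_eq_sSup_image (θ : Fin k → ℝ) (Φ : Set (∀ i, I i)) :
    HwSet θ Φ = sSup (Hw θ '' probDistsOn Φ) := by
  simp only [HwSet, Set.image, probDistsOn, Set.mem_ofPred_eq, and_assoc, eq_comm]

lemma Hw_le_HwSet (θ : Fin k → ℝ) {Φ : Set (∀ i, I i)} {P : (∀ i, I i) → ℝ}
    (hP : P ∈ probDistsOn Φ) : Hw θ P ≤ HwSet θ Φ := by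
  rw [HwSet_eq_sSup_image]
  exact le_csSup ((isCompact_probDistsOn Φ).bddAbove_image (continuous_Hw θ).continuousOn)
    (Set.mem_image_of_mem _ hP)

lemma HwSet_le {θ : Fin k → ℝ} {Φ : Set (∀ i, I i)} {c : ℝ} (hc : 0 ≤ c)
    (h : ∀ P ∈ probDistsOn Φ, Hw θ P ≤ c) : HwSet θ Φ ≤ c := by
  rw [HwSet_eq_sSup_image]
  exact Real.sSup_le (Set.forall_mem_image.2 h) hc

lemma HwSet_mono {θ : Fin k → ℝ} (hθ : ∀ i, 0 ≤ θ i) {Φ Ψ : Set (∀ i, I i)} (h : Φ ⊆ Ψ) :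
    HwSet θ Φ ≤ HwSet θ Ψ := by
  refine HwSet_le ?_ fun P hP => Hw_le_HwSet θ ⟨hP.1, fun α hα => h (hP.2 α hα)⟩
  rw [HwSet_eq_sSup_image]
  exact Real.sSup_nonneg (Set.forall_mem_image.2 fun P hP => Hw_nonneg hθ hP.1)

lemma exists_isMaxOn_Hw (θ : Fin k → ℝ) {Φ : Set (∀ i, I i)} (hΦ : Φ.Nonempty) :
    ∃ P ∈ probDistsOn Φ, IsMaxOn (Hw θ) (probDistsOn Φ) P := by
  obtain ⟨β, hβ⟩ := hΦ
  refine (isCompact_probDistsOn Φ).exists_isMaxOn ⟨Pi.single β 1, isProbDist_single β, ?_⟩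
    (continuous_Hw θ).continuousOn
  intro α hα
  obtain rfl : α = β := by_contra fun h => hα (Pi.single_eq_of_ne h 1)
  exact hβ

lemma isMaxOn_comp_piCongrRight {θ : Fin k → ℝ} {Φ : Set (∀ i, I i)} {P : (∀ i, I i) → ℝ}
    (hmax : IsMaxOn (Hw θ) (probDistsOn Φ) P) (σ : ∀ i, J i ≃ I i) :
    IsMaxOn (Hw θ) (probDistsOn (Equiv.piCongrRight σ ⁻¹' Φ)) (P ∘ Equiv.piCongrRight σ) := by
  intro Q hQ
  have hQ' : Q ∘ Equiv.piCongrRight (fun i => (σ i).symm) ∈ probDistsOn Φ := by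
    have := comp_mem_probDistsOn hQ (Equiv.piCongrRight σ).symm
    rwa [← Set.preimage_comp, Equiv.self_comp_symm, Set.preimage_id] at this
  calc Hw θ Q = Hw θ (Q ∘ Equiv.piCongrRight fun i => (σ i).symm) :=
        (Hw_comp_piCongrRight θ _ Q).symm
    _ ≤ Hw θ P := hmax hQ'
    _ = Hw θ (P ∘ Equiv.piCongrRight σ) := (Hw_comp_piCongrRight θ σ P).symm

end HwSet

section Maximizer

open Finset Filter Topology

variable {I : Fin k → Type*} [∀ i, Fintype (I i)] [∀ i, DecidableEq (I i)]
  {θ : Fin k → ℝ} {Φ : Set (∀ i, I i)} {P : (∀ i, I i) → ℝ} {β : ∀ i, I i}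

lemma sum_mul_neg_logb_marg_add_le_Hw (hθ : IsProbDist θ) (hP : P ∈ probDistsOn Φ)
    (hmax : IsMaxOn (Hw θ) (probDistsOn Φ) P) (hβ : β ∈ Φ) {ε : ℝ} (h0 : 0 < ε) (h1 : ε < 1) :
    ∑ i, θ i * -Real.logb 2 (marg P i (β i) + ε) ≤ Hw θ P := by
  set Q := (1 - ε) • P + ε • Pi.single β 1 with hQ
  have hQmem : Q ∈ probDistsOn Φ := by
    refine ⟨hP.1.mix (isProbDist_single β) h0.le h1.le, fun α hα => ?_⟩
    by_cases hαβ : α = β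
    · exact hαβ ▸ hβ
    · refine hP.2 α fun hPα => hα ?_
      simp [hQ, hPα, Pi.single_eq_of_ne hαβ]
  have hmix : (1 - ε) * Hw θ P + ε * ∑ i, θ i * -Real.logb 2 (marg P i (β i) + ε) ≤ Hw θ Q := by
    simp only [Hw, mul_sum, ← sum_add_distrib]
    refine sum_le_sum fun i _ => ?_
    rw [hQ, marg_mix, marg_single]
    have := mul_le_mul_of_nonneg_left (H2_mix_single_ge (hP.1.marg i) (β i) h0 h1) (hθ.1 i)
    linarith
  have hQP : Hw θ Q ≤ Hw θ P := hmax hQmem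
  exact le_of_mul_le_mul_left (by linarith) h0

lemma marg_pos_of_isMaxOn (hθ : IsProbDist θ) (hP : P ∈ probDistsOn Φ)
    (hmax : IsMaxOn (Hw θ) (probDistsOn Φ) P) (hβ : β ∈ Φ) {i₀ : Fin k} (hi₀ : θ i₀ ≠ 0) :
    0 < marg P i₀ (β i₀) := by
  refine (marg_nonneg hP.1.1 i₀ (β i₀)).lt_of_ne' fun hzero => ?_
  -- in `sum_mul_neg_logb_marg_add_le_Hw` the `i₀`-th summand is `-θ i₀ log₂ ε → ∞` as `ε → 0`
  have hbound : ∀ ε, 0 < ε → ε < 1 → θ i₀ * -Real.logb 2 ε ≤ Hw θ P + 1 := by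
    intro ε h0 h1
    have hterm : ∀ i, 0 ≤ θ i * (1 - Real.logb 2 (marg P i (β i) + ε)) := by
      intro i
      have hpos : 0 < marg P i (β i) + ε := by linarith [marg_nonneg hP.1.1 i (β i)]
      have hle : marg P i (β i) + ε ≤ 2 := by linarith [(hP.1.marg i).le_one (β i)]
      have := Real.logb_le_logb_of_le one_lt_two hpos hle
      rw [Real.logb_self_eq_one one_lt_two] at this
      exact mul_nonneg (hθ.1 i) (by linarith)
    have hsum : ∑ i, θ i * (1 - Real.logb 2 (marg P i (β i) + ε))
        = ∑ i, θ i + ∑ i, θ i * -Real.logb 2 (marg P i (β i) + ε) := by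
      rw [← sum_add_distrib]
      exact sum_congr rfl fun i _ => by ring
    have hsingle := single_le_sum (fun i _ => hterm i) (mem_univ i₀)
    rw [hsum, hθ.2, hzero, zero_add] at hsingle
    nlinarith [hθ.1 i₀, sum_mul_neg_logb_marg_add_le_Hw hθ hP hmax hβ h0 h1]
  have hlim : Tendsto (fun ε => θ i₀ * -Real.logb 2 ε) (𝓝[>] 0) atTop :=
    (tendsto_neg_atBot_atTop.comp (Real.tendsto_logb_nhdsGT_zero one_lt_two)).const_mul_atTop
      ((hθ.1 i₀).lt_of_ne' hi₀)
  obtain ⟨ε, hε, hε0, hε1⟩ := ((hlim.eventually_gt_atTop (Hw θ P + 1)).and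
    (Ioo_mem_nhdsGT one_pos)).exists
  linarith [hbound ε hε0 hε1]

lemma sum_mul_neg_logb_marg_le_Hw (hθ : IsProbDist θ) (hP : P ∈ probDistsOn Φ)
    (hmax : IsMaxOn (Hw θ) (probDistsOn Φ) P) (hβ : β ∈ Φ) :
    ∑ i, θ i * -Real.logb 2 (marg P i (β i)) ≤ Hw θ P := by
  have hlim : Tendsto (fun ε => ∑ i, θ i * -Real.logb 2 (marg P i (β i) + ε)) (𝓝[>] 0)
      (𝓝 (∑ i, θ i * -Real.logb 2 (marg P i (β i)))) := by
    refine tendsto_finsetSum _ fun i _ => ?_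
    rcases eq_or_ne (θ i) 0 with hi | hi
    · simp [hi]
    have hpos := marg_pos_of_isMaxOn hθ hP hmax hβ hi
    have hcont : ContinuousAt (fun ε => θ i * -Real.logb 2 (marg P i (β i) + ε)) 0 :=
      ((Real.continuousAt_logb (by simpa using hpos.ne')).comp
        (continuous_const.add continuous_id).continuousAt).neg.const_mul _
    simpa using hcont.tendsto.mono_left nhdsWithin_le_nhds
  refine le_of_tendsto hlim ?_
  filter_upwards [Ioo_mem_nhdsGT one_pos] with ε hε
  exact sum_mul_neg_logb_marg_add_le_Hw hθ hP hmax hβ hε.1 hε.2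

lemma HwSet_lowerClosure_le_Hw [∀ i, Preorder (I i)] (hθ : IsProbDist θ) (hP : P ∈ probDistsOn Φ)
    (hmax : IsMaxOn (Hw θ) (probDistsOn Φ) P) (hanti : ∀ i, Antitone (marg P i)) :
    HwSet θ (lowerClosure Φ : Set (∀ i, I i)) ≤ Hw θ P := by
  refine HwSet_le (Hw_nonneg hθ.1 hP.1) fun Q hQ => ?_
  have hmono : ∀ α, Q α ≠ 0 → ∃ γ ∈ Φ, ∀ i, marg P i (γ i) ≤ marg P i (α i) := by
    intro α hα
    obtain ⟨γ, hγ, hαγ⟩ := mem_lowerClosure.1 (hQ.2 α hα)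
    exact ⟨γ, hγ, fun i => hanti i (hαγ i)⟩
  have hpos : ∀ α, Q α ≠ 0 → ∀ i, θ i ≠ 0 → 0 < marg P i (α i) := by
    intro α hα i hi
    obtain ⟨γ, hγ, hle⟩ := hmono α hα
    exact (marg_pos_of_isMaxOn hθ hP hmax hγ hi).trans_le (hle i)
  have hcross : ∀ α, Q α ≠ 0 → ∑ i, θ i * -Real.logb 2 (marg P i (α i)) ≤ Hw θ P := by
    intro α hα
    obtain ⟨γ, hγ, hle⟩ := hmono α hα
    refine le_trans (sum_le_sum fun i _ => ?_) (sum_mul_neg_logb_marg_le_Hw hθ hP hmax hγ)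
    rcases eq_or_ne (θ i) 0 with hi | hi
    · simp [hi]
    exact mul_le_mul_of_nonneg_left (neg_le_neg (Real.logb_le_logb_of_le one_lt_two
      (marg_pos_of_isMaxOn hθ hP hmax hγ hi) (hle i))) (hθ.1 i)
  have hgibbs : ∀ i, θ i * H2 (marg Q i) ≤ θ i * ∑ a, marg Q i a * -Real.logb 2 (marg P i a) := by
    intro i
    rcases eq_or_ne (θ i) 0 with hi | hi
    · simp [hi]
    refine mul_le_mul_of_nonneg_left (H2_le_sum_mul_neg_logb (hQ.1.marg i)
      (hP.1.marg i).1 (hP.1.marg i).2.le fun a ha => ?_) (hθ.1 i)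
    obtain ⟨α, hα, rfl⟩ := exists_ne_zero_of_marg_ne_zero ha
    exact (hpos α hα i hi).ne'
  calc Hw θ Q ≤ ∑ i, θ i * ∑ a, marg Q i a * -Real.logb 2 (marg P i a) :=
        sum_le_sum fun i _ => hgibbs i
    _ = ∑ α, Q α * ∑ i, θ i * -Real.logb 2 (marg P i (α i)) := by
        simp only [sum_marg_mul, mul_sum]
        rw [sum_comm]
        exact sum_congr rfl fun α _ => sum_congr rfl fun i _ => by ring
    _ ≤ ∑ α, Q α * Hw θ P := sum_le_sum fun α _ => by
        rcases eq_or_ne (Q α) 0 with hα | hα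
        · simp [hα]
        exact mul_le_mul_of_nonneg_left (hcross α hα) (hQ.1.1 α)
    _ = Hw θ P := by rw [← sum_mul, hQ.1.2, one_mul]

end Maximizer

section Flags

open Finset Matrix

variable {F : Type*} [Field F]

lemma eval_sum_smul {I T : Fin k → Type*} [∀ i, Fintype (I i)] [∀ i, DecidableEq (I i)]
    [∀ i, Fintype (T i)] (t : Tensor F I) (c : ∀ i, T i → F) (u : ∀ i, T i → I i → F) :
    eval t (fun i => ∑ s, c i s • u i s)
      = ∑ L : ∀ i, T i, (∏ i, c i (L i)) * eval t (fun i => u i (L i)) := by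
  simp only [eval, Finset.sum_apply, Pi.smul_apply, smul_eq_mul, prod_univ_sum, sum_mul, mul_sum]
  rw [sum_comm]
  exact sum_congr rfl fun L _ => sum_congr rfl fun α _ => by rw [prod_mul_distrib, mul_assoc]

lemma linearIndependent_of_mem_of_notMem_succ {V : Type*} [AddCommGroup V] [Module F V] {m : ℕ}
    {W : ℕ → Submodule F V} (hW : Antitone W) {w : Fin m → V} (hmem : ∀ b : Fin m, w b ∈ W b)
    (hnotMem : ∀ b : Fin m, w b ∉ W (b + 1)) : LinearIndependent F w := by
  rw [Fintype.linearIndependent_iff]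
  intro g hg
  by_contra! hne
  obtain ⟨b, hb, hmin⟩ := wellFounded_lt.has_min {b | g b ≠ 0} hne
  have hrest : ∑ c ∈ univ.erase b, g c • w c ∈ W (b + 1) := by
    refine Submodule.sum_mem _ fun c hc => ?_
    rcases eq_or_ne (g c) 0 with h | h
    · simp [h]
    have hbc : b < c := lt_of_le_of_ne (not_lt.1 (hmin c h)) (ne_of_mem_erase hc).symm
    exact Submodule.smul_mem _ _ (hW (Nat.succ_le_of_lt hbc) (hmem c))
  rw [← add_sum_erase _ _ (mem_univ b)] at hg
  have hgb : g b • w b ∈ W (b + 1) := by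
    rw [eq_neg_of_add_eq_zero_left hg]
    exact neg_mem hrest
  exact hnotMem b ((Submodule.smul_mem_iff _ hb).1 hgb)

lemma IsCompleteFlag.exists_isUnit_col_mem {m : ℕ} {W : ℕ → Submodule F (Fin m → F)}
    (hW : IsCompleteFlag F W) :
    ∃ B : Matrix (Fin m) (Fin m) F, IsUnit B ∧ ∀ b : Fin m, B.col b ∈ W b := by
  have hlt : ∀ b : Fin m, W (b + 1) < W b := by
    intro b
    refine lt_of_le_of_ne (hW.1 (Nat.le_succ b)) fun h => ?_
    have h1 := hW.2.2 (b + 1)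
    have h2 := hW.2.2 b
    rw [h, Module.finrank_fin_fun] at h1
    rw [Module.finrank_fin_fun] at h2
    omega
  choose w hw hw' using fun b => SetLike.exists_of_lt (hlt b)
  exact ⟨(Matrix.of w)ᵀ, linearIndependent_cols_iff_isUnit.1
    (linearIndependent_of_mem_of_notMem_succ hW.1 hw hw'), hw⟩

def flagOf {m : ℕ} (B : Matrix (Fin m) (Fin m) F) (j : ℕ) : Submodule F (Fin m → F) :=
  Submodule.span F (Set.range fun b : {b : Fin m // j ≤ (b : ℕ)} => B.col b)

lemma card_subtype_le_val (m j : ℕ) : Fintype.card {b : Fin m // j ≤ (b : ℕ)} = m - j := by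
  have := card_filter_add_card_filter_not (s := univ) fun b : Fin m => (b : ℕ) < j
  simp only [not_lt, card_univ, Fintype.card_fin, Fin.card_filter_val_lt] at this
  rw [Fintype.card_subtype]
  omega

lemma isCompleteFlag_flagOf {m : ℕ} {B : Matrix (Fin m) (Fin m) F} (hB : IsUnit B) :
    IsCompleteFlag F (flagOf B) := by
  have hrank : ∀ j, Module.finrank F (flagOf B j) = m - j := fun j => by
    rw [flagOf, finrank_span_eq_card (b := fun s : {b : Fin m // j ≤ (b : ℕ)} => B.col s)
      ((linearIndependent_cols_iff_isUnit.2 hB).comp _ Subtype.val_injective), card_subtype_le_val]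
  refine ⟨fun j j' hjj' => Submodule.span_mono ?_, ?_,
    fun j => by rw [hrank, Module.finrank_fin_fun]⟩
  · rintro _ ⟨b, rfl⟩
    exact ⟨⟨b, hjj'.trans b.2⟩, rfl⟩
  · exact Submodule.eq_top_of_finrank_eq (by rw [hrank, Module.finrank_fin_fun, Nat.sub_zero])

variable {n : Fin k → ℕ}

lemma supp_restrictBy_subset_suppFlag {B : ∀ i, Matrix (Fin (n i)) (Fin (n i)) F}
    {W : ∀ i, ℕ → Submodule F (Fin (n i) → F)} (hBW : ∀ i (b : Fin (n i)), (B i).col b ∈ W i b)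
    (t : Tensor F fun i => Fin (n i)) : supp (restrictBy B t) ⊆ suppFlag t W :=
  fun β hβ => ⟨fun i => (B i).col (β i), fun i => hBW i (β i), hβ⟩

lemma suppFlag_flagOf_subset_lowerClosure (B : ∀ i, Matrix (Fin (n i)) (Fin (n i)) F)
    (t : Tensor F fun i => Fin (n i)) :
    suppFlag t (fun i => flagOf (B i)) ⊆ lowerClosure (supp (restrictBy B t)) := by
  rintro α ⟨v, hv, hev⟩
  choose c hc using fun i => (Submodule.mem_span_range_iff_exists_fun F).1 (hv i)
  rw [← funext hc, eval_sum_smul] at hev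
  obtain ⟨L, -, hL⟩ := exists_ne_zero_of_sum_ne_zero hev
  exact mem_lowerClosure.2 ⟨fun i => L i, right_ne_zero_of_mul hL, fun i => (L i).2⟩

end Flags

section SupportFunctional

variable {F : Type*} [Field F] {n : Fin k → ℕ}

lemma exists_completeFlag_HwSet_suppFlag_le {θ : Fin k → ℝ} (hθ : IsProbDist θ)
    (f : Tensor F fun i => Fin (n i)) {B : ∀ i, Matrix (Fin (n i)) (Fin (n i)) F}
    (hB : IsBasisTuple B) :
    ∃ W : ∀ i, ℕ → Submodule F (Fin (n i) → F), (∀ i, IsCompleteFlag F (W i)) ∧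
      HwSet θ (suppFlag f W) ≤ HwSet θ (supp (restrictBy B f)) := by
  rcases (supp (restrictBy B f)).eq_empty_or_nonempty with hΦ | hΦ
  · refine ⟨fun i => flagOf (B i), fun i => isCompleteFlag_flagOf (hB i), HwSet_mono hθ.1 ?_⟩
    simpa [hΦ] using suppFlag_flagOf_subset_lowerClosure B f
  obtain ⟨P, hP, hmax⟩ := exists_isMaxOn_Hw θ hΦ
  -- reorder each basis so that the marginals of the optimal distribution decrease
  let σ i : Equiv.Perm (Fin (n i)) := Tuple.sort (OrderDual.toDual ∘ marg P i)
  let B' i := (B i).submatrix id (σ i)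
  have hB' : IsBasisTuple B' := fun i =>
    (Matrix.isUnit_submatrix_equiv (Equiv.refl _) (σ i)).2 (hB i)
  have hsupp : supp (restrictBy B' f) = Equiv.piCongrRight σ ⁻¹' supp (restrictBy B f) := rfl
  have hanti : ∀ i, Antitone (marg (P ∘ Equiv.piCongrRight σ) i) := fun i => by
    rw [marg_comp_piCongrRight]
    exact monotone_toDual_comp_iff.1 (Tuple.monotone_sort (OrderDual.toDual ∘ marg P i))
  refine ⟨fun i => flagOf (B' i), fun i => isCompleteFlag_flagOf (hB' i), ?_⟩
  calc HwSet θ (suppFlag f fun i => flagOf (B' i))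
      ≤ HwSet θ (lowerClosure (supp (restrictBy B' f))) :=
        HwSet_mono hθ.1 (suppFlag_flagOf_subset_lowerClosure B' f)
    _ ≤ Hw θ (P ∘ Equiv.piCongrRight σ) := by
        rw [hsupp]
        exact HwSet_lowerClosure_le_Hw hθ (comp_mem_probDistsOn hP _)
          (isMaxOn_comp_piCongrRight hmax σ) hanti
    _ = Hw θ P := Hw_comp_piCongrRight θ σ P
    _ ≤ HwSet θ (supp (restrictBy B f)) := Hw_le_HwSet θ hP

end SupportFunctional

open Filter Topology

theorem statement1_general {k : ℕ} {F : Type*} [Field F] {n : Fin k → ℕ}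
    (θ : Fin k → ℝ) (hθ : IsProbDist θ)
    (f : Tensor F fun i => Fin (n i)) :
    rhoUpper θ f =
      sInf {h | ∃ W : ∀ i, ℕ → Submodule F (Fin (n i) → F),
        (∀ i, IsCompleteFlag F (W i)) ∧ h = HwSet θ (suppFlag f W)} := by
  apply csInf_eq_csInf_of_forall_exists_le
  · rintro _ ⟨B, hB, rfl⟩
    obtain ⟨W, hW, hle⟩ := exists_completeFlag_HwSet_suppFlag_le hθ f hB
    exact ⟨_, ⟨W, hW, rfl⟩, hle⟩
  · rintro _ ⟨W, hW, rfl⟩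
    choose B hB hBW using fun i => (hW i).exists_isUnit_col_mem
    exact ⟨_, ⟨B, hB, rfl⟩, HwSet_mono hθ.1 (supp_restrictBy_subset_suppFlag hBW f)⟩

/-- the upper support functional via complete flags. -/
theorem statement1 {k : ℕ} {F : Type*} [Field F] {n : Fin k → ℕ}
    (θ : Fin k → ℝ) (hθ : IsProbDist θ)
    (f : Tensor F fun i => Fin (n i)) (hf : f ≠ 0) :
    rhoUpper θ f =
      sInf {h | ∃ W : ∀ i, ℕ → Submodule F (Fin (n i) → F),
        (∀ i, IsCompleteFlag F (W i)) ∧ h = HwSet θ (suppFlag f W)} :=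
  statement1_general θ hθ f

end CVZ

end
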